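/- Let ω be the block partial permutation [[I_{r₁}, 0, 0, 0], [0, 0, I_{r₂}, 0], [0, 0, 0, 0]] as above, and Q ∈ X_ω. For A ∈ M_{m,n}(ℝ) with columns A₁, …, A_n, define t_c(A) to be the m×n matrix whose first r₁ + n₁ columns are zero and whose j-th column for j > r₁ + n₁ is the orthogonal projection of A_j onto the column space C(Q). Then Q + s·t_c(A) ∈ X̄_ω for every s ∈ ℝ; in particular t_c(A) is tangent to X_ω at Q. -/

import Mathlib

/-- Upper-left `p × q` submatrix. -/
def ulSub {m n : ℕ} (A : Matrix (Fin m) (Fin n) ℝ) (p q : ℕ) (hp : p ≤ m) (hq : q ≤ n) :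
    Matrix (Fin p) (Fin q) ℝ :=
  A.submatrix (Fin.castLE hp) (Fin.castLE hq)

/-- The block partial permutation `[[I_{r₁},0,0,0],[0,0,I_{r₂},0],[0,0,0,0]]`. -/
def omegaBlk (r₁ r₂ m₁ n₁ n₂ : ℕ) :
    Matrix (Fin (r₁ + r₂ + m₁)) (Fin (r₁ + n₁ + r₂ + n₂)) ℝ :=
  Matrix.of fun i j =>
    if (i.val < r₁ ∧ j.val = i.val) ∨
        (r₁ ≤ i.val ∧ i.val < r₁ + r₂ ∧ j.val = i.val + n₁) then 1 else 0

/-- Membership in the regular part `X_ω`. -/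
def memX {m n : ℕ} (ω A : Matrix (Fin m) (Fin n) ℝ) : Prop :=
  ∀ (p q : ℕ) (_ : 1 ≤ p) (_ : 1 ≤ q) (hp : p ≤ m) (hq : q ≤ n),
    (ulSub A p q hp hq).rank = (ulSub ω p q hp hq).rank

/-- Membership in the matrix Schubert variety `X̄_ω` (upper-left rank inequalities). -/
def memXbar {m n : ℕ} (ω A : Matrix (Fin m) (Fin n) ℝ) : Prop :=
  ∀ (p q : ℕ) (_ : 1 ≤ p) (_ : 1 ≤ q) (hp : p ≤ m) (hq : q ≤ n),
    (ulSub A p q hp hq).rank ≤ (ulSub ω p q hp hq).rank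

/-- The column space `C(Q)` of a matrix `Q`. -/
noncomputable def colSpace {m n : ℕ} (Q : Matrix (Fin m) (Fin n) ℝ) :
    Submodule ℝ (EuclideanSpace ℝ (Fin m)) :=
  Submodule.span ℝ (Set.range fun j : Fin n =>
    (show EuclideanSpace ℝ (Fin m) from WithLp.toLp 2 fun i => Q i j))

/-- The vector `t_c(A)`: first `r₁ + n₁` columns zero, and column `j > r₁ + n₁` the
orthogonal projection of the `j`-th column of `A` onto the column space of `Q`. -/
noncomputable def tc (r₁ r₂ m₁ n₁ n₂ : ℕ)
    (Q A : Matrix (Fin (r₁ + r₂ + m₁)) (Fin (r₁ + n₁ + r₂ + n₂)) ℝ) :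
    Matrix (Fin (r₁ + r₂ + m₁)) (Fin (r₁ + n₁ + r₂ + n₂)) ℝ :=
  Matrix.of fun i j =>
    if j.val < r₁ + n₁ then 0
    else
      (Submodule.orthogonalProjectionOnto (colSpace Q)
        (show EuclideanSpace ℝ (Fin (r₁ + r₂ + m₁)) from WithLp.toLp 2 fun i' => A i' j) :
          EuclideanSpace ℝ (Fin (r₁ + r₂ + m₁))) i

/-! Every column of `t_c(A)` lies in `C(Q)`, so `Q + s • t_c(A) = Q * (1 + s • X)` for some `X`,
and its upper-left `p × n` blocks have rank at most those of `Q`. The first `r₁ + n₁` columns are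
untouched, so for `q > r₁ + n₁` the rank of the `p × q` block exceeds that of `Q`'s
`p × (r₁ + n₁)` block by at most `q - r₁ - n₁`. Counting the ones of the partial permutation `ω`
shows that these two bounds are exactly the rank conditions of `X̄_ω`.

For tangency: rank is lower semicontinuous, so near `Q` every point of `X̄_ω` already lies in
`X_ω`, and hence so does `Q + s • t_c(A)` for small `s`. -/

open Finset in
theorem Fin.card_filter_lt_or_mem_Ico {q a b c : ℕ} (hab : a ≤ b) :
    #{j : Fin q | (j : ℕ) < a ∨ (b ≤ (j : ℕ) ∧ (j : ℕ) < c)} = min a q + (min c q - b) := by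
  have hmap : (univ.filter fun j : Fin q => (j : ℕ) < a ∨ (b ≤ (j : ℕ) ∧ (j : ℕ) < c)).map
      Fin.valEmbedding = range (min a q) ∪ Ico b (min c q) := by
    ext k
    simp only [mem_map, mem_filter, mem_univ, true_and, Fin.valEmbedding_apply, mem_union,
      mem_range, mem_Ico]
    constructor
    · rintro ⟨j, hj, rfl⟩
      omega
    · intro hk
      exact ⟨⟨k, by omega⟩, by simp only; omega, rfl⟩
  have hdisj : Disjoint (range (min a q)) (Ico b (min c q)) := by
    rw [disjoint_left]
    intro k hk hk'
    simp only [mem_range, mem_Ico] at hk hk'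
    omega
  rw [← card_map, hmap, card_union_of_disjoint hdisj, card_range, Nat.card_Ico]

open Matrix Module Submodule Set Filter Topology

namespace Matrix

variable {m n K : Type*} [Fintype n] [Field K]

theorem eventually_rank_le_rank {𝕜 : Type*} [Fintype m] [NontriviallyNormedField 𝕜]
    [CompleteSpace 𝕜] (A : Matrix m n 𝕜) : ∀ᶠ B in 𝓝 A, A.rank ≤ B.rank := by
  obtain ⟨f, hf, -, hind⟩ := exists_fun_fin_finrank_span_eq 𝕜 (range A.col)
  choose g hg using hf
  have hcols : Continuous fun B : Matrix m n 𝕜 => fun i => B.col (g i) :=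
    continuous_pi fun i => continuous_pi fun k => continuous_id.matrix_elem k (g i)
  have hind' : LinearIndependent 𝕜 fun i => A.col (g i) := by simpa only [hg] using hind
  filter_upwards [hcols.continuousAt.eventually hind'.eventually] with B hB
  calc A.rank = Fintype.card (Fin (finrank 𝕜 (span 𝕜 (range A.col)))) := by
        rw [Fintype.card_fin, rank_eq_finrank_span_cols]
    _ = finrank 𝕜 (span 𝕜 (range fun i => B.col (g i))) := (finrank_span_eq_card hB).symm
    _ ≤ B.rank := by
        rw [rank_eq_finrank_span_cols]
        exact finrank_mono (span_mono (range_comp_subset_range _ _))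

theorem rank_le_rank_submatrix_castLE_add [Fintype m] {q k : ℕ} (A : Matrix m (Fin q) K)
    (hk : k ≤ q) : A.rank ≤ (A.submatrix id (Fin.castLE hk)).rank + (q - k) := by
  let L := A.submatrix id (Fin.castLE hk)
  let R := A.submatrix id fun a : Fin (q - k) => (⟨k + a, by omega⟩ : Fin q)
  have hspan : span K (range A.col) ≤ span K (range L.col) ⊔ span K (range R.col) := by
    rw [span_le]
    rintro _ ⟨j, rfl⟩
    rcases lt_or_ge (j : ℕ) k with hj | hj
    · exact mem_sup_left (subset_span ⟨⟨j, hj⟩, rfl⟩)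
    · refine mem_sup_right (subset_span ⟨⟨j - k, by omega⟩, ?_⟩)
      have hj' : (⟨k + (j - k), by omega⟩ : Fin q) = j := Fin.ext (by simp only; omega)
      ext i
      simp only [R, col_apply, submatrix_apply, id_eq, hj']
  calc A.rank ≤ finrank K ↥(span K (range L.col) ⊔ span K (range R.col)) := by
        rw [rank_eq_finrank_span_cols]
        exact Submodule.finrank_mono hspan
    _ ≤ L.rank + R.rank := by
        rw [rank_eq_finrank_span_cols L, rank_eq_finrank_span_cols R]
        exact Submodule.finrank_add_le_finrank_add_finrank _ _
    _ ≤ L.rank + (q - k) := by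
        gcongr
        exact R.rank_le_card_width.trans_eq (Fintype.card_fin _)

theorem exists_eq_mul_of_col_mem_span {l : Type*} [Fintype l] {A : Matrix m n K}
    {B : Matrix m l K} (hB : ∀ j, B.col j ∈ span K (range A.col)) :
    ∃ X : Matrix n l K, B = A * X := by
  simp_rw [← range_mulVecLin] at hB
  choose x hx using hB
  refine ⟨of fun i j => x j i, ?_⟩
  ext i j
  simpa [mul_apply, mulVec, dotProduct] using (congrFun (hx j) i).symm

theorem rank_of_partialPerm [Fintype m] [DecidableEq m] (R : m → n → Prop) [DecidableRel R]
    (hcol : ∀ i i' j, R i j → R i' j → i = i') (hrow : ∀ i j j', R i j → R i j' → j = j') :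
    (of fun i j => if R i j then (1 : K) else 0).rank = Nat.card {j // ∃ i, R i j} := by
  set M : Matrix m n K := of fun i j => if R i j then (1 : K) else 0
  choose g hg using fun j : {j // ∃ i, R i j} => j.2
  have hg_inj : Function.Injective g := fun j j' h =>
    Subtype.ext (hrow _ _ _ (hg j) (h ▸ hg j'))
  have hcolM : ∀ j : {j // ∃ i, R i j}, M.col j = Pi.basisFun K m (g j) := by
    intro j
    ext i
    simp only [M, col_apply, of_apply, Pi.basisFun_apply, Pi.single_apply]
    by_cases hi : R i j
    · rw [if_pos hi, if_pos (hcol _ _ _ hi (hg j))]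
    · rw [if_neg hi, if_neg]
      rintro rfl
      exact hi (hg j)
  have hspan : span K (range M.col) = span K (range (Pi.basisFun K m ∘ g)) := by
    apply le_antisymm
    · rw [span_le]
      rintro _ ⟨j, rfl⟩
      by_cases hj : ∃ i, R i j
      · exact subset_span ⟨⟨j, hj⟩, (hcolM ⟨j, hj⟩).symm⟩
      · have : M.col j = 0 := by
          ext i
          simp only [M, col_apply, of_apply, Pi.zero_apply, ite_eq_right_iff]
          exact fun hi => (hj ⟨i, hi⟩).elim
        rw [this]
        exact zero_mem _
    · rw [span_le]
      rintro _ ⟨j, rfl⟩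
      exact subset_span ⟨j, hcolM j⟩
  rw [rank_eq_finrank_span_cols, hspan,
    finrank_span_eq_card ((Pi.basisFun K m).linearIndependent.comp g hg_inj),
    Nat.card_eq_fintype_card]

end Matrix

theorem rank_ulSub_le_rank_ulSub_add {m n p q k : ℕ} (A : Matrix (Fin m) (Fin n) ℝ)
    (hp : p ≤ m) (hq : q ≤ n) (hk : k ≤ q) :
    (ulSub A p q hp hq).rank ≤ (ulSub A p k hp (hk.trans hq)).rank + (q - k) :=
  (ulSub A p q hp hq).rank_le_rank_submatrix_castLE_add hk

theorem rank_ulSub_mul_le {m n l p q : ℕ} (A : Matrix (Fin m) (Fin n) ℝ)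
    (Y : Matrix (Fin n) (Fin l) ℝ) (hp : p ≤ m) (hq : q ≤ l) :
    (ulSub (A * Y) p q hp hq).rank ≤ (ulSub A p n hp le_rfl).rank := by
  have : ulSub (A * Y) p q hp hq = ulSub A p n hp le_rfl * Y.submatrix id (Fin.castLE hq) := by
    ext i j
    simp [ulSub, mul_apply]
  rw [this]
  exact rank_mul_le_left _ _

theorem rank_ulSub_omegaBlk (r₁ r₂ m₁ n₁ n₂ p q : ℕ) (hp : p ≤ r₁ + r₂ + m₁)
    (hq : q ≤ r₁ + n₁ + r₂ + n₂) :
    (ulSub (omegaBlk r₁ r₂ m₁ n₁ n₂) p q hp hq).rank =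
      min (min p r₁) q + (min (n₁ + min p (r₁ + r₂)) q - (r₁ + n₁)) := by
  let R : Fin p → Fin q → Prop := fun i j =>
    ((i : ℕ) < r₁ ∧ (j : ℕ) = i) ∨ (r₁ ≤ (i : ℕ) ∧ (i : ℕ) < r₁ + r₂ ∧ (j : ℕ) = i + n₁)
  have hω : ulSub (omegaBlk r₁ r₂ m₁ n₁ n₂) p q hp hq = of fun i j => if R i j then 1 else 0 := by
    ext i j
    simp [ulSub, omegaBlk, R]
  have hsupport : ∀ j : Fin q, (∃ i, R i j) ↔
      ((j : ℕ) < min p r₁ ∨ (r₁ + n₁ ≤ (j : ℕ) ∧ (j : ℕ) < n₁ + min p (r₁ + r₂))) := by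
    intro j
    constructor
    · rintro ⟨i, hi⟩
      have := i.isLt
      simp only [R] at hi
      omega
    · rintro (hj | hj)
      · exact ⟨⟨j, by omega⟩, Or.inl ⟨hj.trans_le (min_le_right _ _), rfl⟩⟩
      · exact ⟨⟨j - n₁, by omega⟩,
          Or.inr ⟨by dsimp only; omega, by dsimp only; omega, by dsimp only; omega⟩⟩
  rw [hω, rank_of_partialPerm R (fun i i' j hi hi' => Fin.ext (by omega))
      (fun i j j' hj hj' => Fin.ext (by omega)),
    ← Fin.card_filter_lt_or_mem_Ico (by omega : min p r₁ ≤ r₁ + n₁), ← Fintype.card_subtype,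
    ← Nat.card_eq_fintype_card]
  exact Nat.card_congr (Equiv.subtypeEquivRight hsupport)

theorem memX.rank_ulSub_eq {m n : ℕ} {ω Q : Matrix (Fin m) (Fin n) ℝ} (hQ : memX ω Q)
    (p q : ℕ) (hp : p ≤ m) (hq : q ≤ n) :
    (ulSub Q p q hp hq).rank = (ulSub ω p q hp hq).rank := by
  by_cases hpq : 1 ≤ p ∧ 1 ≤ q
  · exact hQ p q hpq.1 hpq.2 hp hq
  · have hzero : ∀ B : Matrix (Fin p) (Fin q) ℝ, B.rank = 0 := fun B => by
      have := B.rank_le_height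
      have := B.rank_le_width
      omega
    rw [hzero, hzero]

theorem memX.eventually_memX_of_memXbar {m n : ℕ} {ω Q : Matrix (Fin m) (Fin n) ℝ}
    (hQ : memX ω Q) : ∀ᶠ B in 𝓝 Q, memXbar ω B → memX ω B := by
  have hsemicont : ∀ pq : Fin (m + 1) × Fin (n + 1), ∀ᶠ B in 𝓝 Q,
      ∀ (hp : (pq.1 : ℕ) ≤ m) (hq : (pq.2 : ℕ) ≤ n),
        (ulSub Q pq.1 pq.2 hp hq).rank ≤ (ulSub B pq.1 pq.2 hp hq).rank := by
    rintro ⟨p, q⟩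
    have hp : (p : ℕ) ≤ m := Nat.lt_succ_iff.mp p.isLt
    have hq : (q : ℕ) ≤ n := Nat.lt_succ_iff.mp q.isLt
    filter_upwards [((continuous_id.matrix_submatrix (Fin.castLE hp) (Fin.castLE hq)).tendsto
      Q).eventually (ulSub Q p q hp hq).eventually_rank_le_rank] with B hB _ _
    exact hB
  filter_upwards [eventually_all.mpr hsemicont] with B hB hBbar p q h1 h2 hp hq
  refine le_antisymm (hBbar p q h1 h2 hp hq) ?_
  rw [← hQ p q h1 h2 hp hq]
  exact hB (⟨p, by omega⟩, ⟨q, by omega⟩) hp hq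

theorem mem_colSpace_iff {m n : ℕ} (Q : Matrix (Fin m) (Fin n) ℝ)
    (x : EuclideanSpace ℝ (Fin m)) : x ∈ colSpace Q ↔ WithLp.ofLp x ∈ span ℝ (range Q.col) := by
  have : colSpace Q =
      (span ℝ (range Q.col)).map (WithLp.linearEquiv 2 ℝ (Fin m → ℝ)).symm.toLinearMap := by
    rw [map_span, ← range_comp]
    rfl
  rw [this, mem_map_equiv]
  rfl

section tc

variable {r₁ r₂ m₁ n₁ n₂ : ℕ} (Q A : Matrix (Fin (r₁ + r₂ + m₁)) (Fin (r₁ + n₁ + r₂ + n₂)) ℝ)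

theorem col_tc_mem_span (j : Fin (r₁ + n₁ + r₂ + n₂)) :
    (tc r₁ r₂ m₁ n₁ n₂ Q A).col j ∈ span ℝ (range Q.col) := by
  by_cases hj : (j : ℕ) < r₁ + n₁
  · have : (tc r₁ r₂ m₁ n₁ n₂ Q A).col j = 0 := by
      ext i
      simp [tc, hj]
    rw [this]
    exact zero_mem _
  · have : (tc r₁ r₂ m₁ n₁ n₂ Q A).col j =
        WithLp.ofLp (orthogonalProjectionOnto (colSpace Q) (WithLp.toLp 2 (A.col j)) :
          EuclideanSpace ℝ (Fin (r₁ + r₂ + m₁))) := by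
      ext i
      simp [tc, hj]
      rfl
    rw [this, ← mem_colSpace_iff]
    exact coe_mem _

theorem ulSub_add_smul_tc_of_le (s : ℝ) {p q : ℕ} (hp : p ≤ r₁ + r₂ + m₁)
    (hq : q ≤ r₁ + n₁ + r₂ + n₂) (hqk : q ≤ r₁ + n₁) :
    ulSub (Q + s • tc r₁ r₂ m₁ n₁ n₂ Q A) p q hp hq = ulSub Q p q hp hq := by
  ext i j
  have hj : (j : ℕ) < r₁ + n₁ := j.isLt.trans_le hqk
  simp [ulSub, tc, hj]

theorem rank_ulSub_add_smul_tc_le (s : ℝ) {p q : ℕ} (hp : p ≤ r₁ + r₂ + m₁)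
    (hq : q ≤ r₁ + n₁ + r₂ + n₂) :
    (ulSub (Q + s • tc r₁ r₂ m₁ n₁ n₂ Q A) p q hp hq).rank ≤ (ulSub Q p _ hp le_rfl).rank := by
  obtain ⟨X, hX⟩ := exists_eq_mul_of_col_mem_span (col_tc_mem_span Q A)
  have hfactor : Q + s • (Q * X) = Q * (1 + s • X) := by
    rw [Matrix.mul_add, Matrix.mul_one, Matrix.mul_smul]
  rw [hX, hfactor]
  exact rank_ulSub_mul_le _ _ hp hq

end tc

theorem memXbar_add_smul_tc {r₁ r₂ m₁ n₁ n₂ : ℕ}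
    {Q : Matrix (Fin (r₁ + r₂ + m₁)) (Fin (r₁ + n₁ + r₂ + n₂)) ℝ}
    (hQ : memX (omegaBlk r₁ r₂ m₁ n₁ n₂) Q)
    (A : Matrix (Fin (r₁ + r₂ + m₁)) (Fin (r₁ + n₁ + r₂ + n₂)) ℝ) (s : ℝ) :
    memXbar (omegaBlk r₁ r₂ m₁ n₁ n₂) (Q + s • tc r₁ r₂ m₁ n₁ n₂ Q A) := by
  intro p q _ _ hp hq
  rw [rank_ulSub_omegaBlk]
  rcases le_or_gt q (r₁ + n₁) with hqk | hkq
  · rw [ulSub_add_smul_tc_of_le Q A s hp hq hqk, hQ.rank_ulSub_eq, rank_ulSub_omegaBlk]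
  · have hleft := rank_ulSub_le_rank_ulSub_add (Q + s • tc r₁ r₂ m₁ n₁ n₂ Q A) hp hq hkq.le
    rw [ulSub_add_smul_tc_of_le Q A s hp _ le_rfl, hQ.rank_ulSub_eq, rank_ulSub_omegaBlk]
      at hleft
    have hfull := rank_ulSub_add_smul_tc_le Q A s hp hq
    rw [hQ.rank_ulSub_eq, rank_ulSub_omegaBlk] at hfull
    omega

/-- Lemma 5.8: `Q + s · t_c(A)` lies in `X̄_ω` for every real `s`; in
particular `t_c(A)` is tangent to `X_ω` at `Q`. -/
theorem tc_tangent (r₁ r₂ m₁ n₁ n₂ : ℕ)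
    (Q : Matrix (Fin (r₁ + r₂ + m₁)) (Fin (r₁ + n₁ + r₂ + n₂)) ℝ)
    (hQ : memX (omegaBlk r₁ r₂ m₁ n₁ n₂) Q)
    (A : Matrix (Fin (r₁ + r₂ + m₁)) (Fin (r₁ + n₁ + r₂ + n₂)) ℝ) :
    (∀ s : ℝ, memXbar (omegaBlk r₁ r₂ m₁ n₁ n₂) (Q + s • tc r₁ r₂ m₁ n₁ n₂ Q A)) ∧
    tc r₁ r₂ m₁ n₁ n₂ Q A ∈
      tangentConeAt ℝ {B | memX (omegaBlk r₁ r₂ m₁ n₁ n₂) B} Q := by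
  refine ⟨memXbar_add_smul_tc hQ A, ?_⟩
  have hline : Tendsto (fun s : ℝ => Q + s • tc r₁ r₂ m₁ n₁ n₂ Q A) (𝓝 0) (𝓝 Q) := by
    simpa using ((tendsto_id (x := 𝓝 (0 : ℝ))).smul_const (tc r₁ r₂ m₁ n₁ n₂ Q A)).const_add Q
  refine mem_tangentConeAt_of_add_smul_mem (l := 𝓝[≠] (0 : ℝ)) tendsto_id ?_
  filter_upwards [nhdsWithin_le_nhds (hline.eventually hQ.eventually_memX_of_memXbar)] with s hs
  exact hs (memXbar_add_smul_tc hQ A s)
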